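/- arXiv:1612.04638 — 7 statements merged into one kernel-verified Lean document; each statement's English description precedes it below -/
import Mathlib

section
/- Let Z0 be a smooth nowhere-vanishing vector field on an open set U ⊆ ℝ³. Then the following are equivalent: (i) at every point p ∈ U the vector ∇_{Z0}Z0(p) is a scalar multiple of Z0(p); (ii) every integral curve of Z0 in U, i.e. every differentiable curve γ : I → U on an open interval I with γ'(t) = Z0(γ(t)) for all t ∈ I, has its image contained in an affine line of ℝ³. -/
noncomputable section

/-- Partial derivative `∂f/∂xⁱ` at `p`. -/
def pd (i : Fin 3) (f : (Fin 3 → ℝ) → ℝ) (p : Fin 3 → ℝ) : ℝ :=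
  fderiv ℝ f p (Pi.single i 1)

/-- Gradient of a scalar function. -/
def grad (f : (Fin 3 → ℝ) → ℝ) (p : Fin 3 → ℝ) : Fin 3 → ℝ :=
  fun i => pd i f p

/-- Directional derivative `Σᵢ vⁱ ∂f/∂xⁱ` of `f` along the vector `v` at `p`. -/
def dd (v : Fin 3 → ℝ) (f : (Fin 3 → ℝ) → ℝ) (p : Fin 3 → ℝ) : ℝ :=
  ∑ i, v i * pd i f p

/-- `(∇_W W)ⁱ = Σⱼ Wʲ ∂Wⁱ/∂xʲ`. -/
def nab (W : (Fin 3 → ℝ) → (Fin 3 → ℝ)) (p : Fin 3 → ℝ) : Fin 3 → ℝ :=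
  fun i => ∑ j, W p j * pd j (fun q => W q i) p

/-- Euclidean cross product on `ℝ³`. -/
def cross (a b : Fin 3 → ℝ) : Fin 3 → ℝ :=
  ![a 1 * b 2 - a 2 * b 1, a 2 * b 0 - a 0 * b 2, a 0 * b 1 - a 1 * b 0]

/-- `g(v,w) = Σᵢⱼ gᵢⱼ vⁱ wʲ`. -/
def gB (g : Matrix (Fin 3) (Fin 3) ℝ) (v w : Fin 3 → ℝ) : ℝ :=
  ∑ i, ∑ j, g i j * v i * w j

/-- Lie bracket of vector fields: `[V,W]ⁱ = Σⱼ (Vʲ ∂Wⁱ/∂xʲ − Wʲ ∂Vⁱ/∂xʲ)`. -/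
def lieB (V W : (Fin 3 → ℝ) → (Fin 3 → ℝ)) (p : Fin 3 → ℝ) : Fin 3 → ℝ :=
  fun i => ∑ j, (V p j * pd j (fun q => W q i) p - W p j * pd j (fun q => V q i) p)

/-- curl of a vector field on `ℝ³`. -/
def curl (a : (Fin 3 → ℝ) → (Fin 3 → ℝ)) (p : Fin 3 → ℝ) : Fin 3 → ℝ :=
  ![pd 1 (fun q => a q 2) p - pd 2 (fun q => a q 1) p,
    pd 2 (fun q => a q 0) p - pd 0 (fun q => a q 2) p,
    pd 0 (fun q => a q 1) p - pd 1 (fun q => a q 0) p]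

/-- divergence of a vector field. -/
def divg (W : (Fin 3 → ℝ) → (Fin 3 → ℝ)) (p : Fin 3 → ℝ) : ℝ :=
  ∑ i, pd i (fun q => W q i) p

/-- Euclidean inner product on `ℝ³`. -/
def ip (a b : Fin 3 → ℝ) : ℝ := ∑ i, a i * b i

/-!
If `∇_Z Z = ρ Z`, the velocity `w = Z ∘ γ` of an integral curve satisfies `w' = ρ w`, so the unit
tangent `w / ‖w‖` has zero derivative and is constant on the interval: `γ` stays on the line
through `γ t₀` with direction `w t₀`. Conversely, if the integral curve through `p` lies on a line
`q + ℝ d`, then its velocity lies in `ℝ d`, hence so does the derivative `∇_Z Z (p)` of the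
velocity, and `ℝ d` is spanned by `Z p ≠ 0`.
-/

open Set Filter Topology

theorem IsOpen.eq_of_forall_hasDerivAt_zero {F : Type*} [NormedAddCommGroup F]
    [NormedSpace ℝ F] {f : ℝ → F} {I : Set ℝ} (hI : IsOpen I) (hI' : IsPreconnected I)
    (hf : ∀ t ∈ I, HasDerivAt f 0 t) {x y : ℝ} (hx : x ∈ I) (hy : y ∈ I) : f x = f y :=
  hI.is_const_of_deriv_eq_zero hI' (fun t ht => (hf t ht).differentiableAt.differentiableWithinAt)
    (fun t ht => (hf t ht).deriv) hx hy

section InnerProductSpace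

variable {E : Type*} [NormedAddCommGroup E] [InnerProductSpace ℝ E]

open RealInnerProductSpace

theorem HasDerivAt.norm_of_ne_zero {f : ℝ → E} {f' : E} {x : ℝ} (hf : HasDerivAt f f' x)
    (h0 : f x ≠ 0) : HasDerivAt (fun y => ‖f y‖) (⟪f x, f'⟫ / ‖f x‖) x := by
  have hsq : ‖f x‖ ^ 2 ≠ 0 := pow_ne_zero 2 (norm_ne_zero_iff.mpr h0)
  convert hf.norm_sq.sqrt hsq using 1
  · simp only [Real.sqrt_sq (norm_nonneg _)]
  · rw [Real.sqrt_sq (norm_nonneg _)]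
    ring

theorem hasDerivAt_inv_norm_smul_of_hasDerivAt_eq_smul {w : ℝ → E} {c t : ℝ}
    (hw : HasDerivAt w (c • w t) t) (h0 : w t ≠ 0) :
    HasDerivAt (fun s => ‖w s‖⁻¹ • w s) 0 t := by
  have hn : ‖w t‖ ≠ 0 := norm_ne_zero_iff.mpr h0
  have hnorm : HasDerivAt (fun s => ‖w s‖) (c * ‖w t‖) t := by
    convert hw.norm_of_ne_zero h0 using 1
    rw [inner_smul_right, real_inner_self_eq_norm_sq]
    field_simp
  refine ((hnorm.fun_inv hn).smul hw).congr_deriv ?_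
  rw [smul_smul, ← add_smul]
  field_simp
  simp

theorem exists_eq_add_smul_of_forall_hasDerivAt_smul {γ : ℝ → E} {d : E} {I : Set ℝ}
    (hI : IsOpen I) (hI' : IsPreconnected I) (hd : d ≠ 0)
    (hγ : ∀ t ∈ I, ∃ c : ℝ, HasDerivAt γ (c • d) t) {t₀ t : ℝ} (ht₀ : t₀ ∈ I) (ht : t ∈ I) :
    ∃ a : ℝ, γ t = γ t₀ + a • d := by
  -- `‖d‖ ^ 2` times the component of `γ` orthogonal to `d`, which has zero derivative
  have hconst : ‖d‖ ^ 2 • γ t - ⟪d, γ t⟫ • d = ‖d‖ ^ 2 • γ t₀ - ⟪d, γ t₀⟫ • d := by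
    refine hI.eq_of_forall_hasDerivAt_zero (f := fun s => ‖d‖ ^ 2 • γ s - ⟪d, γ s⟫ • d) hI'
      (fun s hs => ?_) ht ht₀
    obtain ⟨c, hc⟩ := hγ s hs
    refine ((hc.const_smul (‖d‖ ^ 2)).sub
      (((hasDerivAt_const s d).inner ℝ hc).smul_const d)).congr_deriv ?_
    simp [inner_smul_right, smul_smul, mul_comm]
  have hd2 : ‖d‖ ^ 2 ≠ 0 := pow_ne_zero 2 (norm_ne_zero_iff.mpr hd)
  refine ⟨⟪d, γ t - γ t₀⟫ / ‖d‖ ^ 2, smul_right_injective E hd2 ?_⟩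
  simp only [smul_add, smul_smul, mul_div_cancel₀ _ hd2, inner_sub_right, sub_smul]
  linear_combination (norm := module) hconst

theorem exists_eq_add_smul_of_acceleration_parallel {γ w : ℝ → E} {I : Set ℝ}
    (hI : IsOpen I) (hI' : IsPreconnected I) (hγ : ∀ t ∈ I, HasDerivAt γ (w t) t)
    (hw0 : ∀ t ∈ I, w t ≠ 0) (hw : ∀ t ∈ I, ∃ c : ℝ, HasDerivAt w (c • w t) t)
    {t₀ t : ℝ} (ht₀ : t₀ ∈ I) (ht : t ∈ I) : ∃ a : ℝ, γ t = γ t₀ + a • w t₀ := by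
  have hunit : ∀ s ∈ I, ‖w s‖⁻¹ • w s = ‖w t₀‖⁻¹ • w t₀ := fun s hs =>
    hI.eq_of_forall_hasDerivAt_zero (f := fun s => ‖w s‖⁻¹ • w s) hI' (fun u hu =>
      let ⟨c, hc⟩ := hw u hu
      hasDerivAt_inv_norm_smul_of_hasDerivAt_eq_smul hc (hw0 u hu)) hs ht₀
  refine exists_eq_add_smul_of_forall_hasDerivAt_smul hI hI' (hw0 t₀ ht₀)
    (fun s hs => ⟨‖w s‖ * ‖w t₀‖⁻¹, ?_⟩) ht₀ ht
  rw [mul_smul, ← hunit s hs, smul_inv_smul₀ (norm_ne_zero_iff.mpr (hw0 s hs))]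
  exact hγ s hs

end InnerProductSpace

theorem FiniteDimensional.exists_eq_add_smul_of_acceleration_parallel {F : Type*}
    [NormedAddCommGroup F] [NormedSpace ℝ F] [FiniteDimensional ℝ F] {γ w : ℝ → F} {I : Set ℝ}
    (hI : IsOpen I) (hI' : IsPreconnected I) (hγ : ∀ t ∈ I, HasDerivAt γ (w t) t)
    (hw0 : ∀ t ∈ I, w t ≠ 0) (hw : ∀ t ∈ I, ∃ c : ℝ, HasDerivAt w (c • w t) t)
    {t₀ t : ℝ} (ht₀ : t₀ ∈ I) (ht : t ∈ I) : ∃ a : ℝ, γ t = γ t₀ + a • w t₀ := by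
  let e : F ≃L[ℝ] EuclideanSpace ℝ (Fin (Module.finrank ℝ F)) := toEuclidean
  obtain ⟨a, ha⟩ := _root_.exists_eq_add_smul_of_acceleration_parallel
    (γ := fun s => e (γ s)) (w := fun s => e (w s)) hI hI'
    (fun s hs => e.hasFDerivAt.comp_hasDerivAt s (hγ s hs))
    (fun s hs => e.map_ne_zero_iff.mpr (hw0 s hs))
    (fun s hs =>
      let ⟨c, hc⟩ := hw s hs
      ⟨c, (e.hasFDerivAt.comp_hasDerivAt s hc).congr_deriv (map_smul e c (w s))⟩) ht₀ ht
  exact ⟨a, e.injective (by simpa using ha)⟩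

theorem exists_eq_smul_of_mem_span_singleton {K V : Type*} [Field K] [AddCommGroup V]
    [Module K V] {x y d : V} (hx : x ∈ K ∙ d) (hy : y ∈ K ∙ d) (hy0 : y ≠ 0) :
    ∃ c : K, x = c • y := by
  obtain ⟨a, rfl⟩ := Submodule.mem_span_singleton.mp hx
  obtain ⟨b, rfl⟩ := Submodule.mem_span_singleton.mp hy
  have hb : b ≠ 0 := by
    rintro rfl
    exact hy0 (zero_smul K d)
  exact ⟨a / b, by rw [smul_smul, div_mul_cancel₀ a hb]⟩

theorem HasDerivAt.mem_of_eventually_mem {𝕜 F : Type*} [NontriviallyNormedField 𝕜]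
    [NormedAddCommGroup F] [NormedSpace 𝕜 F] {K : Submodule 𝕜 F} (hK : IsClosed (K : Set F))
    {f : 𝕜 → F} {f' : F} {t : 𝕜} (hf : HasDerivAt f f' t) (hfK : ∀ᶠ s in 𝓝 t, f s ∈ K) :
    f' ∈ K := by
  refine hK.mem_of_tendsto (hasDerivAt_iff_tendsto_slope.mp hf) ?_
  filter_upwards [nhdsWithin_le_nhds hfK] with s hs
  rw [slope_def_module]
  exact K.smul_mem _ (K.sub_mem hs hfK.self_of_nhds)

section NormedSpace

variable {F : Type*} [NormedAddCommGroup F] [NormedSpace ℝ F]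

theorem exists_fderiv_apply_eq_smul_of_integralCurve_mem_line {Z : F → F} {Z' : F →L[ℝ] F}
    {γ : ℝ → F} {I : Set ℝ} {t₀ : ℝ} {q d : F} (hI : IsOpen I) (ht₀ : t₀ ∈ I)
    (hγ : ∀ t ∈ I, HasDerivAt γ (Z (γ t)) t) (hZ : HasFDerivAt Z Z' (γ t₀))
    (hZ0 : Z (γ t₀) ≠ 0) (hline : ∀ t ∈ I, ∃ s : ℝ, γ t = q + s • d) :
    ∃ ρ : ℝ, Z' (Z (γ t₀)) = ρ • Z (γ t₀) := by
  have hK : IsClosed ((ℝ ∙ d : Submodule ℝ F) : Set F) := Submodule.closed_of_finiteDimensional _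
  have hvel : ∀ t ∈ I, Z (γ t) ∈ ℝ ∙ d := fun t ht =>
    ((hγ t ht).sub_const q).mem_of_eventually_mem hK <|
      eventually_of_mem (hI.mem_nhds ht) fun s hs =>
        let ⟨a, ha⟩ := hline s hs
        Submodule.mem_span_singleton.mpr ⟨a, by rw [ha, add_sub_cancel_left]⟩
  have hacc : Z' (Z (γ t₀)) ∈ ℝ ∙ d :=
    (hZ.comp_hasDerivAt t₀ (hγ t₀ ht₀)).mem_of_eventually_mem hK
      (eventually_of_mem (hI.mem_nhds ht₀) hvel)
  exact exists_eq_smul_of_mem_span_singleton hacc (hvel t₀ ht₀) hZ0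

theorem ContDiffAt.exists_integralCurve_mem [CompleteSpace F] {Z : F → F} {p : F} {U : Set F}
    (hZ : ContDiffAt ℝ 1 Z p) (hU : U ∈ 𝓝 p) :
    ∃ γ : ℝ → F, γ 0 = p ∧ ∃ ε > 0, ∀ t ∈ Ioo (-ε) ε, γ t ∈ U ∧ HasDerivAt γ (Z (γ t)) t := by
  obtain ⟨γ, hγ0, ε, hε, hγ⟩ := hZ.exists_forall_mem_closedBall_exists_eq_forall_mem_Ioo_hasDerivAt₀ 0
  have hγU : ∀ᶠ t in 𝓝 0, γ t ∈ U :=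
    (hγ 0 (by simpa using hε)).continuousAt.preimage_mem_nhds (hγ0 ▸ hU)
  obtain ⟨δ, hδ, hball⟩ := Metric.eventually_nhds_iff.mp hγU
  have hshrink : ∀ r, min ε δ ≤ r → Ioo (-min ε δ) (min ε δ) ⊆ Ioo (-r) r := fun r hr =>
    Ioo_subset_Ioo (neg_le_neg hr) hr
  refine ⟨γ, hγ0, min ε δ, lt_min hε hδ, fun t ht => ⟨hball ?_, hγ t ?_⟩⟩
  · simpa [Real.dist_0_eq_abs, abs_lt] using hshrink δ (min_le_right ε δ) ht
  · simpa using hshrink ε (min_le_left ε δ) ht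

end NormedSpace

theorem nab_eq_fderiv {W : (Fin 3 → ℝ) → (Fin 3 → ℝ)} {p : Fin 3 → ℝ}
    (hW : DifferentiableAt ℝ W p) : nab W p = fderiv ℝ W p (W p) := by
  funext i
  conv_rhs => rw [pi_eq_sum_univ' (W p), map_sum]
  simp [nab, pd, fderiv_apply hW i, Finset.sum_apply]

theorem hasDerivAt_comp_integralCurve {W : (Fin 3 → ℝ) → (Fin 3 → ℝ)} {γ : ℝ → Fin 3 → ℝ}
    {t : ℝ} (hW : DifferentiableAt ℝ W (γ t)) (hγ : HasDerivAt γ (W (γ t)) t) :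
    HasDerivAt (fun s => W (γ s)) (nab W (γ t)) t :=
  nab_eq_fderiv hW ▸ hW.hasFDerivAt.comp_hasDerivAt t hγ

/-- For a smooth nowhere-vanishing vector field `Z0` on an open set `U ⊆ ℝ³`,
`∇_{Z0}Z0` is pointwise a scalar multiple of `Z0` iff every integral curve of `Z0` in `U`
(defined on an open interval) has its image contained in an affine line of `ℝ³`. -/
theorem szebehely_straight_lines
    (U : Set (Fin 3 → ℝ)) (hU : IsOpen U)
    (Z0 : (Fin 3 → ℝ) → (Fin 3 → ℝ)) (hZ0 : ContDiffOn ℝ (⊤ : ℕ∞) Z0 U)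
    (hnz : ∀ p ∈ U, Z0 p ≠ 0) :
    (∀ p ∈ U, ∃ ρ : ℝ, nab Z0 p = ρ • Z0 p) ↔
      (∀ (I : Set ℝ) (γ : ℝ → (Fin 3 → ℝ)), IsOpen I → IsPreconnected I →
        (∀ t ∈ I, γ t ∈ U) → (∀ t ∈ I, HasDerivAt γ (Z0 (γ t)) t) →
        ∃ q d : Fin 3 → ℝ, d ≠ 0 ∧ ∀ t ∈ I, ∃ s : ℝ, γ t = q + s • d) := by
  have hdiff : ∀ p ∈ U, DifferentiableAt ℝ Z0 p := fun p hp =>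
    (hZ0.contDiffAt (hU.mem_nhds hp)).differentiableAt (by simp)
  constructor
  · intro h I γ hI hI' hγU hγ
    rcases I.eq_empty_or_nonempty with rfl | ⟨t₀, ht₀⟩
    · exact ⟨0, Pi.single 0 1, by simp, by simp⟩
    refine ⟨γ t₀, Z0 (γ t₀), hnz _ (hγU t₀ ht₀), fun t ht =>
      FiniteDimensional.exists_eq_add_smul_of_acceleration_parallel hI hI' hγ
        (fun s hs => hnz _ (hγU s hs)) (fun s hs => ?_) ht₀ ht⟩
    obtain ⟨ρ, hρ⟩ := h _ (hγU s hs)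
    exact ⟨ρ, hρ ▸ hasDerivAt_comp_integralCurve (hdiff _ (hγU s hs)) (hγ s hs)⟩
  · intro h p hp
    have hC1 : ContDiffAt ℝ 1 Z0 p :=
      (hZ0.contDiffAt (hU.mem_nhds hp)).of_le (by exact_mod_cast le_top)
    obtain ⟨γ, rfl, ε, hε, hγ⟩ := hC1.exists_integralCurve_mem (hU.mem_nhds hp)
    obtain ⟨q, d, -, hline⟩ := h _ γ isOpen_Ioo isPreconnected_Ioo
      (fun t ht => (hγ t ht).1) (fun t ht => (hγ t ht).2)
    rw [nab_eq_fderiv (hdiff _ hp)]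
    exact exists_fderiv_apply_eq_smul_of_integralCurve_mem_line isOpen_Ioo
      ⟨neg_lt_zero.mpr hε, hε⟩ (fun t ht => (hγ t ht).2) (hdiff _ hp).hasFDerivAt (hnz _ hp) hline
end
end

section
/- Let g be a constant real symmetric invertible 3×3 matrix, φ, ψ : U → ℝ smooth on an open set U ⊆ ℝ³ with ∇φ × ∇ψ ≠ 0 on U; set Z0 := ∇φ × ∇ψ, Z1 := g⁻¹∇φ, Z2 := g⁻¹∇ψ. Let ρ : U → ℝ be smooth and nowhere zero and set Z̃0 := ρ·Z0. Then on U: ∇_{Z̃0}Z̃0(φ) = ρ²·∇_{Z0}Z0(φ) and ∇_{Z̃0}Z̃0(ψ) = ρ²·∇_{Z0}Z0(ψ). Consequently, if ∇_{Z0}Z0(φ) is nowhere zero on U, then Ã := ½ g(Z̃0,Z̃0)/∇_{Z̃0}Z̃0(φ) equals A := ½ g(Z0,Z0)/∇_{Z0}Z0(φ), and X̃ := (∇_{Z̃0}Z̃0(ψ))·Z1 − (∇_{Z̃0}Z̃0(φ))·Z2 equals ρ²·X, where X := (∇_{Z0}Z0(ψ))·Z1 − (∇_{Z0}Z0(φ))·Z2.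 -/
noncomputable section

/-
By the Leibniz rule, `∇_{ρZ}(ρZ) = ρ Z(ρ) Z + ρ² ∇_Z Z`. Since `Z0 = ∇φ × ∇ψ` is orthogonal to
`∇φ` and `∇ψ`, the first term is killed by both `φ` and `ψ`, so `∇_{Z̃0}Z̃0(φ)` and
`∇_{Z̃0}Z̃0(ψ)` pick up exactly the factor `ρ²`. That factor cancels against
`g(Z̃0,Z̃0) = ρ² g(Z0,Z0)` in `Ã` and factors out of `X̃`.
-/

open Matrix

theorem cross_eq_crossProduct (a b : Fin 3 → ℝ) : cross a b = a ⨯₃ b := rfl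

theorem dd_eq_dotProduct (v : Fin 3 → ℝ) (f : (Fin 3 → ℝ) → ℝ) (p : Fin 3 → ℝ) :
    dd v f p = v ⬝ᵥ grad f p := rfl

theorem dd_add (v w : Fin 3 → ℝ) (f : (Fin 3 → ℝ) → ℝ) (p : Fin 3 → ℝ) :
    dd (v + w) f p = dd v f p + dd w f p := by
  simp only [dd_eq_dotProduct, add_dotProduct]

theorem dd_smul (c : ℝ) (v : Fin 3 → ℝ) (f : (Fin 3 → ℝ) → ℝ) (p : Fin 3 → ℝ) :
    dd (c • v) f p = c * dd v f p := by
  simp only [dd_eq_dotProduct, smul_dotProduct, smul_eq_mul]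

theorem dd_cross_grad_left (φ ψ : (Fin 3 → ℝ) → ℝ) (p : Fin 3 → ℝ) :
    dd (cross (grad φ p) (grad ψ p)) φ p = 0 := by
  rw [dd_eq_dotProduct, cross_eq_crossProduct, dotProduct_comm, dot_self_cross]

theorem dd_cross_grad_right (φ ψ : (Fin 3 → ℝ) → ℝ) (p : Fin 3 → ℝ) :
    dd (cross (grad φ p) (grad ψ p)) ψ p = 0 := by
  rw [dd_eq_dotProduct, cross_eq_crossProduct, dotProduct_comm, dot_cross_self]

theorem gB_smul_smul (g : Matrix (Fin 3) (Fin 3) ℝ) (a b : ℝ) (v w : Fin 3 → ℝ) :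
    gB g (a • v) (b • w) = a * b * gB g v w := by
  simp only [gB, Pi.smul_apply, smul_eq_mul, Finset.mul_sum]
  exact Finset.sum_congr rfl fun _ _ => Finset.sum_congr rfl fun _ _ => by ring

theorem pd_mul {f h : (Fin 3 → ℝ) → ℝ} {p : Fin 3 → ℝ} (hf : DifferentiableAt ℝ f p)
    (hh : DifferentiableAt ℝ h p) (i : Fin 3) :
    pd i (fun q => f q * h q) p = f p * pd i h p + h p * pd i f p := by
  simp only [pd, fderiv_fun_mul hf hh, _root_.add_apply, _root_.smul_apply, smul_eq_mul]

theorem differentiableAt_pd {f : (Fin 3 → ℝ) → ℝ} {p : Fin 3 → ℝ} (hf : ContDiffAt ℝ 2 f p)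
    (i : Fin 3) : DifferentiableAt ℝ (pd i f) p :=
  ((hf.fderiv_right (m := 1) (by norm_num)).differentiableAt one_ne_zero).clm_apply
    (differentiableAt_const _)

theorem differentiableAt_grad {f : (Fin 3 → ℝ) → ℝ} {p : Fin 3 → ℝ} (hf : ContDiffAt ℝ 2 f p) :
    DifferentiableAt ℝ (grad f) p :=
  differentiableAt_pi.2 (differentiableAt_pd hf)

theorem DifferentiableAt.cross {E : Type*} [NormedAddCommGroup E] [NormedSpace ℝ E]
    {a b : E → Fin 3 → ℝ} {p : E} (ha : DifferentiableAt ℝ a p) (hb : DifferentiableAt ℝ b p) :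
    DifferentiableAt ℝ (fun q => cross (a q) (b q)) p := by
  have ha' := differentiableAt_pi.1 ha
  have hb' := differentiableAt_pi.1 hb
  refine differentiableAt_pi.2 fun i => ?_
  fin_cases i <;>
    simp only [_root_.cross, Fin.isValue, Fin.zero_eta, Fin.mk_one, Fin.reduceFinMk, cons_val_zero,
      cons_val_one, cons_val] <;>
    fun_prop

theorem nab_smul {W : (Fin 3 → ℝ) → Fin 3 → ℝ} {ρ : (Fin 3 → ℝ) → ℝ} {p : Fin 3 → ℝ}
    (hρ : DifferentiableAt ℝ ρ p) (hW : DifferentiableAt ℝ W p) :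
    nab (fun q => ρ q • W q) p = (ρ p * dd (W p) ρ p) • W p + ρ p ^ 2 • nab W p := by
  funext i
  have hWi := differentiableAt_pi.1 hW i
  simp only [nab, dd, Pi.smul_apply, Pi.add_apply, smul_eq_mul, pd_mul hρ hWi,
    Fin.sum_univ_three]
  ring

theorem dd_nab_smul {W : (Fin 3 → ℝ) → Fin 3 → ℝ} {ρ f : (Fin 3 → ℝ) → ℝ} {p : Fin 3 → ℝ}
    (hρ : DifferentiableAt ℝ ρ p) (hW : DifferentiableAt ℝ W p) (hf : dd (W p) f p = 0) :
    dd (nab (fun q => ρ q • W q) p) f p = ρ p ^ 2 * dd (nab W p) f p := by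
  rw [nab_smul hρ hW, dd_add, dd_smul, dd_smul, hf, mul_zero, zero_add]

theorem rescaling_invariance_general
    (g : Matrix (Fin 3) (Fin 3) ℝ)
    (U : Set (Fin 3 → ℝ)) (hU : IsOpen U)
    (φ ψ : (Fin 3 → ℝ) → ℝ)
    (hφ : ContDiffOn ℝ (⊤ : ℕ∞) φ U) (hψ : ContDiffOn ℝ (⊤ : ℕ∞) ψ U)
    (Z0 Z1 Z2 : (Fin 3 → ℝ) → (Fin 3 → ℝ))
    (hZ0 : Z0 = fun p => cross (grad φ p) (grad ψ p))
    (ρ : (Fin 3 → ℝ) → ℝ) (hρ : ContDiffOn ℝ (⊤ : ℕ∞) ρ U)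
    (hρnz : ∀ p ∈ U, ρ p ≠ 0)
    (Zt : (Fin 3 → ℝ) → (Fin 3 → ℝ)) (hZt : Zt = fun p => ρ p • Z0 p)
    (p : Fin 3 → ℝ) (hp : p ∈ U) :
    dd (nab Zt p) φ p = ρ p ^ 2 * dd (nab Z0 p) φ p ∧
    dd (nab Zt p) ψ p = ρ p ^ 2 * dd (nab Z0 p) ψ p ∧
    ((∀ q ∈ U, dd (nab Z0 q) φ q ≠ 0) →
      1/2 * gB g (Zt p) (Zt p) / dd (nab Zt p) φ p
          = 1/2 * gB g (Z0 p) (Z0 p) / dd (nab Z0 p) φ p ∧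
      dd (nab Zt p) ψ p • Z1 p - dd (nab Zt p) φ p • Z2 p
          = ρ p ^ 2 • (dd (nab Z0 p) ψ p • Z1 p - dd (nab Z0 p) φ p • Z2 p)) := by
  subst hZt hZ0
  have hnhds := hU.mem_nhds hp
  have hρp : DifferentiableAt ℝ ρ p := (hρ.contDiffAt hnhds).differentiableAt (by simp)
  have hZ0p := (differentiableAt_grad ((hφ.contDiffAt hnhds).of_le (by norm_cast))).cross
    (differentiableAt_grad ((hψ.contDiffAt hnhds).of_le (by norm_cast)))
  have hZtφ := dd_nab_smul hρp hZ0p (dd_cross_grad_left φ ψ p)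
  have hZtψ := dd_nab_smul hρp hZ0p (dd_cross_grad_right φ ψ p)
  refine ⟨hZtφ, hZtψ, fun _ => ⟨?_, ?_⟩⟩
  · rw [hZtφ, gB_smul_smul, ← sq, mul_left_comm,
      mul_div_mul_left _ _ (pow_ne_zero 2 (hρnz p hp))]
  · rw [hZtφ, hZtψ, smul_sub, mul_smul, mul_smul]

/-- rescaling invariance (Section 4): with `Z̃0 = ρ·Z0`,
`∇_{Z̃0}Z̃0(φ) = ρ²·∇_{Z0}Z0(φ)`, `∇_{Z̃0}Z̃0(ψ) = ρ²·∇_{Z0}Z0(ψ)`, and consequently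
`Ã = A` and `X̃ = ρ²·X`. -/
theorem rescaling_invariance
    (g : Matrix (Fin 3) (Fin 3) ℝ) (hsym : g.IsSymm) (hinv : IsUnit g.det)
    (U : Set (Fin 3 → ℝ)) (hU : IsOpen U)
    (φ ψ : (Fin 3 → ℝ) → ℝ)
    (hφ : ContDiffOn ℝ (⊤ : ℕ∞) φ U) (hψ : ContDiffOn ℝ (⊤ : ℕ∞) ψ U)
    (hind : ∀ p ∈ U, cross (grad φ p) (grad ψ p) ≠ 0)
    (Z0 Z1 Z2 : (Fin 3 → ℝ) → (Fin 3 → ℝ))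
    (hZ0 : Z0 = fun p => cross (grad φ p) (grad ψ p))
    (hZ1 : Z1 = fun p => g⁻¹.mulVec (grad φ p))
    (hZ2 : Z2 = fun p => g⁻¹.mulVec (grad ψ p))
    (ρ : (Fin 3 → ℝ) → ℝ) (hρ : ContDiffOn ℝ (⊤ : ℕ∞) ρ U)
    (hρnz : ∀ p ∈ U, ρ p ≠ 0)
    (Zt : (Fin 3 → ℝ) → (Fin 3 → ℝ)) (hZt : Zt = fun p => ρ p • Z0 p)
    (p : Fin 3 → ℝ) (hp : p ∈ U) :
    dd (nab Zt p) φ p = ρ p ^ 2 * dd (nab Z0 p) φ p ∧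
    dd (nab Zt p) ψ p = ρ p ^ 2 * dd (nab Z0 p) ψ p ∧
    ((∀ q ∈ U, dd (nab Z0 q) φ q ≠ 0) →
      1/2 * gB g (Zt p) (Zt p) / dd (nab Zt p) φ p
          = 1/2 * gB g (Z0 p) (Z0 p) / dd (nab Z0 p) φ p ∧
      dd (nab Zt p) ψ p • Z1 p - dd (nab Zt p) φ p • Z2 p
          = ρ p ^ 2 • (dd (nab Z0 p) ψ p • Z1 p - dd (nab Z0 p) φ p • Z2 p)) :=
  rescaling_invariance_general g U hU φ ψ hφ hψ Z0 Z1 Z2 hZ0 ρ hρ hρnz Zt hZt p hp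
end
end

section
/- Let g be a constant real symmetric invertible 3×3 matrix and Z0 a smooth vector field on an open set U ⊆ ℝ³ with g(Z0,Z0) nowhere zero on U; set a := g·Z0. Let X, Y be smooth vector fields on U with g(Z0, X) = 0 and g(Z0, Y) = 0 on U, and with X(p), Y(p) linearly independent for every p ∈ U. Then for each p ∈ U: ⟨curl a, a⟩(p) = 0 if and only if g([X,Y], Z0)(p) = 0. -/
/-!
Let `α = ⟨a, ·⟩` be the `1`-form dual to `a = g Z0`; by symmetry of `g` the hypotheses say that
`α` kills `X` and `Y`, so `g([X,Y], Z0) = α([X,Y])`. Differentiating `α(X) = α(Y) = 0` turns the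
Cartan formula `dα(X,Y) = X α(Y) - Y α(X) - α([X,Y])` into `α([X,Y]) = -⟨curl a, X × Y⟩`.
Pointwise, `a` is orthogonal to the independent vectors `X, Y`, hence a nonzero multiple of
`X × Y`, so `⟨curl a, a⟩` and `⟨curl a, X × Y⟩` vanish together.
-/

noncomputable section

open Filter Topology
open scoped Matrix

lemma gB_eq_dotProduct_mulVec (g : Matrix (Fin 3) (Fin 3) ℝ) (v w : Fin 3 → ℝ) :
    gB g v w = v ⬝ᵥ g *ᵥ w := by
  simp only [gB, dotProduct, Matrix.mulVec, Finset.mul_sum]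
  exact Finset.sum_congr rfl fun i _ => Finset.sum_congr rfl fun j _ => by ring

lemma gB_eq_mulVec_dotProduct {g : Matrix (Fin 3) (Fin 3) ℝ} (hg : g.IsSymm) (v w : Fin 3 → ℝ) :
    gB g v w = g *ᵥ v ⬝ᵥ w := by
  rw [gB_eq_dotProduct_mulVec, Matrix.dotProduct_mulVec, ← Matrix.mulVec_transpose, hg.eq]

lemma pd_eq_zero_of_eventuallyEq_zero {f : (Fin 3 → ℝ) → ℝ} {p : Fin 3 → ℝ}
    (hf : f =ᶠ[𝓝 p] 0) (j : Fin 3) : pd j f p = 0 := by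
  simp [pd, hf.fderiv_eq]

lemma pd_dotProduct {f h : (Fin 3 → ℝ) → (Fin 3 → ℝ)} {p : Fin 3 → ℝ}
    (hf : DifferentiableAt ℝ f p) (hh : DifferentiableAt ℝ h p) (j : Fin 3) :
    pd j (fun q => f q ⬝ᵥ h q) p
      = ∑ i, (pd j (fun q => f q i) p * h p i + f p i * pd j (fun q => h q i) p) := by
  have hfi := differentiableAt_pi.mp hf
  have hhi := differentiableAt_pi.mp hh
  simp only [pd, dotProduct]
  rw [fderiv_fun_sum fun i _ => (hfi i).fun_mul (hhi i), sum_apply]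
  refine Finset.sum_congr rfl fun i _ => ?_
  rw [fderiv_fun_mul (hfi i) (hhi i)]
  simp only [add_apply, smul_apply, smul_eq_mul]
  ring

lemma sum_mul_pd_eq_neg_of_eventually_dotProduct_eq_zero
    {a X : (Fin 3 → ℝ) → (Fin 3 → ℝ)} {p : Fin 3 → ℝ}
    (ha : DifferentiableAt ℝ a p) (hX : DifferentiableAt ℝ X p)
    (haX : ∀ᶠ q in 𝓝 p, a q ⬝ᵥ X q = 0) (j : Fin 3) :
    ∑ i, a p i * pd j (fun q => X q i) p = -∑ i, pd j (fun q => a q i) p * X p i := by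
  have h := pd_dotProduct ha hX j
  rw [pd_eq_zero_of_eventuallyEq_zero haX, Finset.sum_add_distrib] at h
  linarith

theorem lieB_dotProduct_eq_neg_curl_dotProduct_cross
    {a X Y : (Fin 3 → ℝ) → (Fin 3 → ℝ)} {p : Fin 3 → ℝ}
    (ha : DifferentiableAt ℝ a p) (hX : DifferentiableAt ℝ X p) (hY : DifferentiableAt ℝ Y p)
    (haX : ∀ᶠ q in 𝓝 p, a q ⬝ᵥ X q = 0) (haY : ∀ᶠ q in 𝓝 p, a q ⬝ᵥ Y q = 0) :
    lieB X Y p ⬝ᵥ a p = -(curl a p ⬝ᵥ X p ⨯₃ Y p) := by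
  have hDX := sum_mul_pd_eq_neg_of_eventually_dotProduct_eq_zero ha hX haX
  have hDY := sum_mul_pd_eq_neg_of_eventually_dotProduct_eq_zero ha hY haY
  calc lieB X Y p ⬝ᵥ a p
      = ∑ j, X p j * ∑ i, a p i * pd j (fun q => Y q i) p
        - ∑ j, Y p j * ∑ i, a p i * pd j (fun q => X q i) p := by
        simp only [lieB, dotProduct, Fin.sum_univ_three]
        ring
    _ = ∑ j, Y p j * ∑ i, pd j (fun q => a q i) p * X p i
        - ∑ j, X p j * ∑ i, pd j (fun q => a q i) p * Y p i := by
        simp only [hDX, hDY, mul_neg, Finset.sum_neg_distrib]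
        ring
    _ = -(curl a p ⬝ᵥ X p ⨯₃ Y p) := by
        simp only [curl, cross_apply, dotProduct, Fin.sum_univ_three, Matrix.cons_val_zero,
          Matrix.cons_val_one, Matrix.cons_val_two, Matrix.head_cons, Matrix.tail_cons]
        ring

lemma dotProduct_eq_zero_of_cross_eq_zero {a c w : Fin 3 → ℝ} (hac : a ⨯₃ c = 0) (ha : a ≠ 0)
    (hw : w ⬝ᵥ a = 0) : w ⬝ᵥ c = 0 := by
  have hc : (a ⬝ᵥ a) • c = (a ⬝ᵥ c) • a := by
    have := cross_cross_eq_smul_sub_smul' a a c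
    rw [hac, map_zero, eq_comm, sub_eq_zero] at this
    exact this.symm
  have := congrArg (w ⬝ᵥ ·) hc
  simp only [dotProduct_smul, hw, smul_eq_mul, mul_zero] at this
  exact (mul_eq_zero.mp this).resolve_left (dotProduct_self_eq_zero.not.mpr ha)

lemma dotProduct_eq_zero_iff_of_cross_eq_zero {a c w : Fin 3 → ℝ} (hac : a ⨯₃ c = 0)
    (ha : a ≠ 0) (hc : c ≠ 0) : w ⬝ᵥ a = 0 ↔ w ⬝ᵥ c = 0 :=
  ⟨dotProduct_eq_zero_of_cross_eq_zero hac ha,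
    dotProduct_eq_zero_of_cross_eq_zero (by rw [← cross_anticomm, hac, neg_zero]) hc⟩

lemma cross_cross_eq_zero_of_dotProduct_eq_zero {a x y : Fin 3 → ℝ} (hx : a ⬝ᵥ x = 0)
    (hy : a ⬝ᵥ y = 0) : a ⨯₃ (x ⨯₃ y) = 0 := by
  rw [cross_cross_eq_smul_sub_smul', hy, dotProduct_comm, hx, zero_smul, zero_smul, sub_zero]

theorem dual_frobenius_general
    (g : Matrix (Fin 3) (Fin 3) ℝ) (hsym : g.IsSymm)
    (U : Set (Fin 3 → ℝ)) (hU : IsOpen U)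
    (Z0 : (Fin 3 → ℝ) → (Fin 3 → ℝ)) (hZ0 : ContDiffOn ℝ (⊤ : ℕ∞) Z0 U)
    (hGnz : ∀ p ∈ U, gB g (Z0 p) (Z0 p) ≠ 0)
    (a : (Fin 3 → ℝ) → (Fin 3 → ℝ)) (ha : a = fun p => g.mulVec (Z0 p))
    (X Y : (Fin 3 → ℝ) → (Fin 3 → ℝ))
    (hX : ContDiffOn ℝ (⊤ : ℕ∞) X U) (hY : ContDiffOn ℝ (⊤ : ℕ∞) Y U)
    (hXo : ∀ p ∈ U, gB g (Z0 p) (X p) = 0)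
    (hYo : ∀ p ∈ U, gB g (Z0 p) (Y p) = 0)
    (hindep : ∀ p ∈ U, LinearIndependent ℝ ![X p, Y p])
    (p : Fin 3 → ℝ) (hp : p ∈ U) :
    ip (curl a p) (a p) = 0 ↔ gB g (lieB X Y p) (Z0 p) = 0 := by
  have haq (q : Fin 3 → ℝ) : a q = g *ᵥ Z0 q := congrFun ha q
  have hUp : U ∈ 𝓝 p := hU.mem_nhds hp
  have haX : ∀ᶠ q in 𝓝 p, a q ⬝ᵥ X q = 0 := by
    filter_upwards [hUp] with q hq
    rw [haq, ← gB_eq_mulVec_dotProduct hsym, hXo q hq]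
  have haY : ∀ᶠ q in 𝓝 p, a q ⬝ᵥ Y q = 0 := by
    filter_upwards [hUp] with q hq
    rw [haq, ← gB_eq_mulVec_dotProduct hsym, hYo q hq]
  have hda : DifferentiableAt ℝ a p := ha ▸
    (Matrix.mulVecLin g).toContinuousLinearMap.differentiableAt.comp p
      ((hZ0.contDiffAt hUp).differentiableAt (by simp))
  have ha0 : a p ≠ 0 := fun h =>
    hGnz p hp (by rw [gB_eq_dotProduct_mulVec, ← haq, h, dotProduct_zero])
  have hXY0 : X p ⨯₃ Y p ≠ 0 := crossProduct_ne_zero_iff_linearIndependent.mpr (hindep p hp)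
  rw [gB_eq_dotProduct_mulVec, ← haq,
    lieB_dotProduct_eq_neg_curl_dotProduct_cross hda
      ((hX.contDiffAt hUp).differentiableAt (by simp))
      ((hY.contDiffAt hUp).differentiableAt (by simp)) haX haY, neg_eq_zero]
  exact dotProduct_eq_zero_iff_of_cross_eq_zero
    (cross_cross_eq_zero_of_dotProduct_eq_zero haX.self_of_nhds haY.self_of_nhds) ha0 hXY0

/-- dual Frobenius, (4.6): for smooth `X`, `Y` spanning the `g`-orthogonal
complement of `Z0`, at each `p ∈ U`: `⟨curl a, a⟩(p) = 0 ↔ g([X,Y],Z0)(p) = 0`,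
where `a = g·Z0`. -/
theorem dual_frobenius
    (g : Matrix (Fin 3) (Fin 3) ℝ) (hsym : g.IsSymm) (hinv : IsUnit g.det)
    (U : Set (Fin 3 → ℝ)) (hU : IsOpen U)
    (Z0 : (Fin 3 → ℝ) → (Fin 3 → ℝ)) (hZ0 : ContDiffOn ℝ (⊤ : ℕ∞) Z0 U)
    (hGnz : ∀ p ∈ U, gB g (Z0 p) (Z0 p) ≠ 0)
    (a : (Fin 3 → ℝ) → (Fin 3 → ℝ)) (ha : a = fun p => g.mulVec (Z0 p))
    (X Y : (Fin 3 → ℝ) → (Fin 3 → ℝ))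
    (hX : ContDiffOn ℝ (⊤ : ℕ∞) X U) (hY : ContDiffOn ℝ (⊤ : ℕ∞) Y U)
    (hXo : ∀ p ∈ U, gB g (Z0 p) (X p) = 0)
    (hYo : ∀ p ∈ U, gB g (Z0 p) (Y p) = 0)
    (hindep : ∀ p ∈ U, LinearIndependent ℝ ![X p, Y p])
    (p : Fin 3 → ℝ) (hp : p ∈ U) :
    ip (curl a p) (a p) = 0 ↔ gB g (lieB X Y p) (Z0 p) = 0 :=
  dual_frobenius_general g hsym U hU Z0 hZ0 hGnz a ha X Y hX hY hXo hYo hindep p hp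
end
end

section
/- Let g be a constant real symmetric invertible 3×3 matrix with g₁₃ = 0 and g₂₃ = g₃₃. On U := {(x,y,z) ∈ ℝ³ : y ≠ 0}, let φ := x/y, ψ := y + z, and define the vector fields Z1' := (g₁₂x + (g₂₂−g₃₃)y) ∂/∂x − (g₁₁x + g₁₂y) ∂/∂y + (g₁₁x + g₁₂y) ∂/∂z and Z2' := ∂/∂z. Then: (i) [Z1', Z2'] = 0 on U; (ii) at each point of U, g·Z1' is a scalar multiple of ∇φ and g·Z2' is a scalar multiple of ∇ψ; (iii) for any smooth F : ℝ → ℝ, the function V := F(g₁₁x² + (g₂₂−g₃₃)y² + 2g₁₂xy) satisfies Z1'(V) = 0 and Z2'(V) = 0 on U. -/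
noncomputable section

/-!
`Z1'` is the linear field `p ↦ A p` whose matrix `A` has zero third column, so it commutes with
the constant field `Z2' = ∂/∂z`. With `g₁₃ = 0` and `g₂₃ = g₃₃` the third component of `g·Z1'`
cancels and the other two are proportional to `∇(x/y) = (1/y, -x/y², 0)`, while
`g·∂/∂z = g₃₃ (0, 1, 1) = g₃₃ ∇(y+z)`. Finally, for `Q = g₁₁x² + (g₂₂−g₃₃)y² + 2g₁₂xy` we have
`Z1' = (∂_y Q, -∂_x Q, ∂_x Q) / 2`, so `Z1'(Q) = 0`, and `Q` does not depend on `z`; by the chain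
rule both fields then kill every `F ∘ Q`.
-/

open Matrix

section Calculus

variable {f : (Fin 3 → ℝ) → ℝ} {f' : (Fin 3 → ℝ) →L[ℝ] ℝ} {p : Fin 3 → ℝ}

lemma hasFDerivAt_coord (k : Fin 3) :
    HasFDerivAt (fun q : Fin 3 → ℝ => q k) (ContinuousLinearMap.proj (R := ℝ) k) p :=
  hasFDerivAt_apply k p

lemma grad_eq_of_hasFDerivAt (h : HasFDerivAt f f' p) :
    grad f p = fun i => f' (Pi.single i 1) := by
  ext i
  rw [grad, pd, h.fderiv]

lemma dd_eq_of_hasFDerivAt (h : HasFDerivAt f f' p) (v : Fin 3 → ℝ) : dd v f p = f' v := by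
  conv_rhs => rw [← Finset.univ_sum_single v]
  simp only [dd, pd, h.fderiv, map_sum]
  refine Finset.sum_congr rfl fun i _ => ?_
  rw [← smul_eq_mul, ← map_smul, ← Pi.single_smul', smul_eq_mul, mul_one]

lemma dd_comp {Q : (Fin 3 → ℝ) → ℝ} {F : ℝ → ℝ} (hF : DifferentiableAt ℝ F (Q p))
    (hQ : DifferentiableAt ℝ Q p) (v : Fin 3 → ℝ) :
    dd v (fun q => F (Q q)) p = deriv F (Q p) * dd v Q p := by
  have h : HasFDerivAt (fun q => F (Q q)) _ p := hF.hasDerivAt.comp_hasFDerivAt p hQ.hasFDerivAt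
  rw [dd_eq_of_hasFDerivAt h, dd_eq_of_hasFDerivAt hQ.hasFDerivAt]
  rfl

lemma dd_gB_self (G : Matrix (Fin 3) (Fin 3) ℝ) (v : Fin 3 → ℝ) :
    dd v (fun q => gB G q q) p = gB G v p + gB G p v := by
  have h := HasFDerivAt.fun_sum (u := Finset.univ) fun i _ =>
    HasFDerivAt.fun_sum (u := Finset.univ) fun j _ =>
      ((hasFDerivAt_coord (p := p) i).const_mul (G i j)).fun_mul (hasFDerivAt_coord j)
  simp only [gB]
  rw [dd_eq_of_hasFDerivAt h]
  simp only [_root_.sum_apply, _root_.add_apply, _root_.smul_apply,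
    ContinuousLinearMap.proj_apply, smul_eq_mul,
    ← Finset.sum_add_distrib]
  exact Finset.sum_congr rfl fun i _ => Finset.sum_congr rfl fun j _ => by ring

lemma pd_mulVec_apply (A : Matrix (Fin 3) (Fin 3) ℝ) (i j : Fin 3) :
    pd j (fun q => (A *ᵥ q) i) p = A i j := by
  have h : HasFDerivAt (fun q => (A *ᵥ q) i)
      (ContinuousLinearMap.proj i ∘L LinearMap.toContinuousLinearMap A.mulVecLin) p := by
    exact (ContinuousLinearMap.proj i ∘L LinearMap.toContinuousLinearMap A.mulVecLin).hasFDerivAt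
  simp [pd, h.fderiv]

lemma lieB_mulVec_const (A : Matrix (Fin 3) (Fin 3) ℝ) (w : Fin 3 → ℝ) :
    lieB (fun q => A *ᵥ q) (fun _ => w) p = -(A *ᵥ w) := by
  ext i
  simp only [lieB, pd_mulVec_apply]
  simp [pd, mulVec, dotProduct, mul_comm]

lemma grad_x_div_y (hp : p 1 ≠ 0) :
    grad (fun q => q 0 / q 1) p = ![(p 1)⁻¹, -(p 0 / p 1 ^ 2), 0] := by
  have h : HasFDerivAt (fun q : Fin 3 → ℝ => q 0 * (q 1)⁻¹) _ p :=
    (hasFDerivAt_coord 0).fun_mul ((hasDerivAt_inv hp).comp_hasFDerivAt p (hasFDerivAt_coord 1))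
  simp only [div_eq_mul_inv]
  rw [grad_eq_of_hasFDerivAt h]
  ext i
  fin_cases i <;> simp

lemma grad_y_add_z : grad (fun q => q 1 + q 2) p = ![0, 1, 1] := by
  rw [grad_eq_of_hasFDerivAt ((hasFDerivAt_coord 1).fun_add (hasFDerivAt_coord 2))]
  ext i
  fin_cases i <;> simp

end Calculus

section Example

variable (g : Matrix (Fin 3) (Fin 3) ℝ)

def z1Matrix : Matrix (Fin 3) (Fin 3) ℝ :=
  !![g 0 1, g 1 1 - g 2 2, 0; -g 0 0, -g 0 1, 0; g 0 0, g 0 1, 0]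

def quadMatrix : Matrix (Fin 3) (Fin 3) ℝ :=
  !![g 0 0, g 0 1, 0; g 0 1, g 1 1 - g 2 2, 0; 0, 0, 0]

lemma z1Field_eq_mulVec : (fun p : Fin 3 → ℝ => ![g 0 1 * p 0 + (g 1 1 - g 2 2) * p 1,
    -(g 0 0 * p 0 + g 0 1 * p 1), g 0 0 * p 0 + g 0 1 * p 1]) = fun p => z1Matrix g *ᵥ p := by
  ext p i
  fin_cases i <;> simp [z1Matrix, mulVec, dotProduct, Fin.sum_univ_three, add_comm]

lemma quadForm_eq_gB (q : Fin 3 → ℝ) :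
    g 0 0 * q 0 ^ 2 + (g 1 1 - g 2 2) * q 1 ^ 2 + 2 * g 0 1 * q 0 * q 1
      = gB (quadMatrix g) q q := by
  simp [quadMatrix, gB, Fin.sum_univ_three]
  ring

end Example

theorem example2_case0a_general
    (g : Matrix (Fin 3) (Fin 3) ℝ) (hsym : g.IsSymm)
    (h13 : g 0 2 = 0) (h2333 : g 1 2 = g 2 2)
    (U : Set (Fin 3 → ℝ)) (hU : U = {p | p 1 ≠ 0})
    (φ ψ : (Fin 3 → ℝ) → ℝ)
    (hφ : φ = fun p => p 0 / p 1) (hψ : ψ = fun p => p 1 + p 2)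
    (Z1' Z2' : (Fin 3 → ℝ) → (Fin 3 → ℝ))
    (hZ1' : Z1' = fun p => ![g 0 1 * p 0 + (g 1 1 - g 2 2) * p 1,
                            -(g 0 0 * p 0 + g 0 1 * p 1),
                            g 0 0 * p 0 + g 0 1 * p 1])
    (hZ2' : Z2' = fun _ => ![0, 0, 1]) :
    (∀ p ∈ U, lieB Z1' Z2' p = 0) ∧
    (∀ p ∈ U, (∃ c : ℝ, g.mulVec (Z1' p) = c • grad φ p) ∧
              (∃ c : ℝ, g.mulVec (Z2' p) = c • grad ψ p)) ∧
    (∀ F : ℝ → ℝ, ContDiff ℝ (⊤ : ℕ∞) F → ∀ p ∈ U,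
      dd (Z1' p) (fun q => F (g 0 0 * q 0 ^ 2 + (g 1 1 - g 2 2) * q 1 ^ 2
                              + 2 * g 0 1 * q 0 * q 1)) p = 0 ∧
      dd (Z2' p) (fun q => F (g 0 0 * q 0 ^ 2 + (g 1 1 - g 2 2) * q 1 ^ 2
                              + 2 * g 0 1 * q 0 * q 1)) p = 0) := by
  rw [z1Field_eq_mulVec] at hZ1'
  subst hU hφ hψ hZ1' hZ2'
  have h10 : g 1 0 = g 0 1 := hsym.apply 0 1
  have h20 : g 2 0 = 0 := (hsym.apply 0 2).trans h13
  have h21 : g 2 1 = g 2 2 := (hsym.apply 1 2).trans h2333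
  simp only [quadForm_eq_gB]
  refine ⟨fun p _ => ?_, fun p (hp : p 1 ≠ 0) => ⟨?_, ⟨g 2 2, ?_⟩⟩, fun F hF p _ => ?_⟩
  · rw [lieB_mulVec_const]
    ext i
    fin_cases i <;> simp [z1Matrix]
  · refine ⟨(g 0 0 * (g 1 1 - g 2 2) - g 0 1 ^ 2) * p 1 ^ 2, ?_⟩
    rw [grad_x_div_y hp]
    ext i
    fin_cases i <;> simp [z1Matrix, mulVec, dotProduct, Fin.sum_univ_three, h10, h20, h21, h13, h2333]
    all_goals field_simp; ring
  · rw [grad_y_add_z]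
    ext i
    fin_cases i <;> simp [mulVec, dotProduct, Fin.sum_univ_three, h10, h20, h21, h13, h2333]
  · have hF' := hF.differentiable (by simp)
    have hQ : Differentiable ℝ fun q => gB (quadMatrix g) q q := by unfold gB; fun_prop
    rw [dd_comp (hF' _) (hQ p), dd_comp (hF' _) (hQ p), dd_gB_self, dd_gB_self]
    refine ⟨mul_eq_zero_of_right _ ?_, mul_eq_zero_of_right _ ?_⟩
    · simp [z1Matrix, quadMatrix, gB, mulVec, dotProduct, Fin.sum_univ_three]
      ring
    · simp [quadMatrix, gB, Fin.sum_univ_three]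

/-- Example 2: for `φ = x/y`, `ψ = y+z` on `y ≠ 0`, and a constant
symmetric invertible `g` with `g₁₃ = 0`, `g₂₃ = g₃₃`:
(i) `[Z1',Z2'] = 0`; (ii) `g·Z1' ∥ ∇φ` and `g·Z2' ∥ ∇ψ` pointwise;
(iii) any `V = F(g₁₁x² + (g₂₂−g₃₃)y² + 2g₁₂xy)` satisfies `Z1'(V) = Z2'(V) = 0`. -/
theorem example2_case0a
    (g : Matrix (Fin 3) (Fin 3) ℝ) (hsym : g.IsSymm) (hinv : IsUnit g.det)
    (h13 : g 0 2 = 0) (h2333 : g 1 2 = g 2 2)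
    (U : Set (Fin 3 → ℝ)) (hU : U = {p | p 1 ≠ 0})
    (φ ψ : (Fin 3 → ℝ) → ℝ)
    (hφ : φ = fun p => p 0 / p 1) (hψ : ψ = fun p => p 1 + p 2)
    (Z1' Z2' : (Fin 3 → ℝ) → (Fin 3 → ℝ))
    (hZ1' : Z1' = fun p => ![g 0 1 * p 0 + (g 1 1 - g 2 2) * p 1,
                            -(g 0 0 * p 0 + g 0 1 * p 1),
                            g 0 0 * p 0 + g 0 1 * p 1])
    (hZ2' : Z2' = fun _ => ![0, 0, 1]) :
    (∀ p ∈ U, lieB Z1' Z2' p = 0) ∧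
    (∀ p ∈ U, (∃ c : ℝ, g.mulVec (Z1' p) = c • grad φ p) ∧
              (∃ c : ℝ, g.mulVec (Z2' p) = c • grad ψ p)) ∧
    (∀ F : ℝ → ℝ, ContDiff ℝ (⊤ : ℕ∞) F → ∀ p ∈ U,
      dd (Z1' p) (fun q => F (g 0 0 * q 0 ^ 2 + (g 1 1 - g 2 2) * q 1 ^ 2
                              + 2 * g 0 1 * q 0 * q 1)) p = 0 ∧
      dd (Z2' p) (fun q => F (g 0 0 * q 0 ^ 2 + (g 1 1 - g 2 2) * q 1 ^ 2
                              + 2 * g 0 1 * q 0 * q 1)) p = 0) :=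
  example2_case0a_general g hsym h13 h2333 U hU φ ψ hφ hψ Z1' Z2' hZ1' hZ2'
end
end

section
/- Let φ := xyz + x + y, ψ := z, and Z0' := (xz+1) ∂/∂x − (yz+1) ∂/∂y (a rescaling of ∇φ × ∇ψ). Then for every constant real symmetric invertible 3×3 matrix g, the function ⟨curl(g·Z0'), g·Z0'⟩ is not identically zero on ℝ³; i.e. there is no non-singular constant symmetric g making the g-orthogonal complement of Z0' an integrable distribution. -/
noncomputable section

/-!
Every component of `g·Z0'` has the form `a·xz + b·yz + c`, and a direct computation gives
`⟨curl(g·Z0'), g·Z0'⟩ = (y - x)·A₂₂ + z·(A₂₁ - A₂₀) + z²·(x·A₂₁ - y·A₂₀)` where `A = adj g`.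
If this vanishes identically, the last row of `adj g` is zero, and then
`det g = (adj g * g)₂₂ = 0`.
-/

open Matrix

theorem Matrix.det_eq_zero_of_adjugate_row_eq_zero {n R : Type*} [Fintype n] [DecidableEq n]
    [CommRing R] (A : Matrix n n R) (i : n) (h : ∀ k, A.adjugate i k = 0) : A.det = 0 := by
  have hii := congr_fun (congr_fun (adjugate_mul A) i) i
  simpa [mul_apply, h] using hii.symm

open ContinuousLinearMap in
lemma pd_bilinear (a b c : ℝ) (j : Fin 3) (p : Fin 3 → ℝ) :
    pd j (fun q => a * (q 0 * q 2) + b * (q 1 * q 2) + c) p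
      = ![a * p 2, b * p 2, a * p 0 + b * p 1] j := by
  have hcoord (k : Fin 3) :
      HasFDerivAt (fun q : Fin 3 → ℝ => q k) (proj k : (Fin 3 → ℝ) →L[ℝ] ℝ) p :=
    hasFDerivAt_apply k p
  have H : HasFDerivAt (fun q : Fin 3 → ℝ => a * (q 0 * q 2) + b * (q 1 * q 2) + c) _ p :=
    ((((hcoord 0).mul (hcoord 2)).const_mul a).add
      (((hcoord 1).mul (hcoord 2)).const_mul b)).add_const c
  rw [pd, H.fderiv]
  fin_cases j <;> simp

lemma mulVec_Z0'_apply (g : Matrix (Fin 3) (Fin 3) ℝ) (q : Fin 3 → ℝ) (i : Fin 3) :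
    (g *ᵥ ![q 0 * q 2 + 1, -(q 1 * q 2 + 1), 0]) i
      = g i 0 * (q 0 * q 2) + (-g i 1) * (q 1 * q 2) + (g i 0 - g i 1) := by
  simp only [mulVec, dotProduct, Fin.sum_univ_three, cons_val_zero, cons_val_one, cons_val,
    mul_zero, add_zero]
  ring

lemma ip_curl_mulVec_Z0' (g : Matrix (Fin 3) (Fin 3) ℝ) (p : Fin 3 → ℝ) :
    ip (curl (fun q => g *ᵥ ![q 0 * q 2 + 1, -(q 1 * q 2 + 1), 0]) p)
        (g *ᵥ ![p 0 * p 2 + 1, -(p 1 * p 2 + 1), 0])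
      = (p 1 - p 0) * g.adjugate 2 2 + p 2 * (g.adjugate 2 1 - g.adjugate 2 0)
        + p 2 ^ 2 * (p 0 * g.adjugate 2 1 - p 1 * g.adjugate 2 0) := by
  simp only [ip, curl, Fin.sum_univ_three, mulVec_Z0'_apply, pd_bilinear]
  simp only [cons_val_zero, cons_val_one, cons_val, adjugate_fin_three, of_apply, cons_val',
    cons_val_fin_one]
  ring

lemma coeffs_eq_zero_of_forall_poly_eq_zero {a b c : ℝ}
    (h : ∀ p : Fin 3 → ℝ, (p 1 - p 0) * c + p 2 * (b - a) + p 2 ^ 2 * (p 0 * b - p 1 * a) = 0) :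
    a = 0 ∧ b = 0 ∧ c = 0 := by
  have h₁ := h ![1, 0, 0]
  have h₂ := h ![0, 0, 1]
  have h₃ := h ![1, 0, 1]
  simp at h₁ h₂ h₃
  refine ⟨?_, ?_, ?_⟩ <;> linarith

theorem example4_no_case1_general
    (Z0' : (Fin 3 → ℝ) → (Fin 3 → ℝ))
    (hZ0' : Z0' = fun p => ![p 0 * p 2 + 1, -(p 1 * p 2 + 1), 0]) :
    ∀ g : Matrix (Fin 3) (Fin 3) ℝ, g.IsSymm → IsUnit g.det →
      ¬ (∀ p : Fin 3 → ℝ,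
          ip (curl (fun q => g.mulVec (Z0' q)) p) (g.mulVec (Z0' p)) = 0) := by
  subst hZ0'
  intro g _ hdet hall
  simp only [ip_curl_mulVec_Z0'] at hall
  obtain ⟨h₀, h₁, h₂⟩ := coeffs_eq_zero_of_forall_poly_eq_zero hall
  have hrow : ∀ k, g.adjugate 2 k = 0 := by
    intro k
    fin_cases k <;> assumption
  simp [g.det_eq_zero_of_adjugate_row_eq_zero 2 hrow] at hdet

/-- Example 4: for `φ = xyz + x + y`, `ψ = z`, with
`Z0' = (xz+1)∂x − (yz+1)∂y`, no constant symmetric invertible `g` makes the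
`g`-orthogonal complement of `Z0'` integrable: `⟨curl(g·Z0'), g·Z0'⟩ ≢ 0` on `ℝ³`. -/
theorem example4_no_case1
    (φ ψ : (Fin 3 → ℝ) → ℝ)
    (hφ : φ = fun p => p 0 * p 1 * p 2 + p 0 + p 1) (hψ : ψ = fun p => p 2)
    (Z0' : (Fin 3 → ℝ) → (Fin 3 → ℝ))
    (hZ0' : Z0' = fun p => ![p 0 * p 2 + 1, -(p 1 * p 2 + 1), 0]) :
    ∀ g : Matrix (Fin 3) (Fin 3) ℝ, g.IsSymm → IsUnit g.det →
      ¬ (∀ p : Fin 3 → ℝ,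
          ip (curl (fun q => g.mulVec (Z0' q)) p) (g.mulVec (Z0' p)) = 0) :=
  example4_no_case1_general Z0' hZ0'
end
end

section
/- Let U := {(x,y,z) ∈ ℝ³ : x ≠ 0 and y ≠ 0}, φ := ½(x²+y²), ψ := z/x, and let Z0' := xy ∂/∂x − x² ∂/∂y + yz ∂/∂z (a rescaling of ∇φ × ∇ψ on U), Z1 := ∇φ = (x, y, 0), X' := −z ∂/∂x + x ∂/∂z. One has ∇_{Z0'}Z0'(φ) = −x²(x²+y²) ≠ 0 on U; set A := ½⟨Z0', Z0'⟩ / ∇_{Z0'}Z0'(φ). Then for any constants C₁, C₂, C₃, the function V := C₁(x²+y²+z²) + C₂/y² − C₃/(x²+z²) satisfies X'(V) = 0 and A·Z0'(Z1(V)) = Z0'(V) − Z0'(A)·Z1(V) on U. -/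
noncomputable section

/-!
Everything reduces to first-order calculus: `dd v · p = fderiv ℝ · p v` is a derivation. Since
`Z0'` acts as a derivation, the energy-free equation says exactly that `A·Z1(V) − V` is annihilated
by `Z0'`. Being a multiple of `∇φ × ∇ψ`, `Z0'` has the first integrals `φ = ½(x²+y²)` and `ψ = z/x`,
and on `U` a direct computation gives `A·Z1(V) − V = G(φ, ψ)` for an explicit rational `G`; the chain
rule then finishes the proof. The identity `X'(V) = 0` holds because `V` depends only on `y` and `x²+z²`.
-/

open Topology

section DirectionalDerivative

variable {v p : Fin 3 → ℝ} {f g : (Fin 3 → ℝ) → ℝ}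

theorem dd_eq_fderiv (v : Fin 3 → ℝ) (f : (Fin 3 → ℝ) → ℝ) (p : Fin 3 → ℝ) :
    dd v f p = fderiv ℝ f p v := by
  conv_rhs => rw [pi_eq_sum_univ' v]
  simp [dd, pd, map_sum]

theorem dd_congr (h : f =ᶠ[𝓝 p] g) : dd v f p = dd v g p := by
  rw [dd_eq_fderiv, dd_eq_fderiv, h.fderiv_eq]

@[simp]
theorem dd_const (c : ℝ) : dd v (fun _ => c) p = 0 := by
  simp [dd_eq_fderiv]

@[simp]
theorem dd_coord (i : Fin 3) : dd v (fun q => q i) p = v i := by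
  rw [dd_eq_fderiv, (hasFDerivAt_apply i p).fderiv]
  rfl

theorem dd_add_s17 (hf : DifferentiableAt ℝ f p) (hg : DifferentiableAt ℝ g p) :
    dd v (fun q => f q + g q) p = dd v f p + dd v g p := by
  simp [dd_eq_fderiv, fderiv_fun_add hf hg]

theorem dd_sub (hf : DifferentiableAt ℝ f p) (hg : DifferentiableAt ℝ g p) :
    dd v (fun q => f q - g q) p = dd v f p - dd v g p := by
  simp [dd_eq_fderiv, fderiv_fun_sub hf hg]

@[simp]
theorem dd_neg : dd v (fun q => -f q) p = -dd v f p := by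
  simp [dd_eq_fderiv]

theorem dd_mul (hf : DifferentiableAt ℝ f p) (hg : DifferentiableAt ℝ g p) :
    dd v (fun q => f q * g q) p = f p * dd v g p + g p * dd v f p := by
  simp [dd_eq_fderiv, fderiv_fun_mul hf hg]

theorem dd_sq (hf : DifferentiableAt ℝ f p) :
    dd v (fun q => f q ^ 2) p = 2 * f p * dd v f p := by
  simp [dd_eq_fderiv, fderiv_fun_pow 2 hf]

theorem dd_div (hf : DifferentiableAt ℝ f p) (hg : DifferentiableAt ℝ g p) (hg0 : g p ≠ 0) :
    dd v (fun q => f q / g q) p = (g p * dd v f p - f p * dd v g p) / g p ^ 2 := by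
  have h : HasFDerivAt (fun q => f q * (g q)⁻¹) _ p :=
    hf.hasFDerivAt.fun_mul ((hasFDerivAt_inv hg0).comp p hg.hasFDerivAt)
  simp only [dd_eq_fderiv, div_eq_mul_inv]
  rw [h.fderiv]
  simp only [add_apply, smul_apply, ContinuousLinearMap.comp_apply,
    ContinuousLinearMap.toSpanSingleton_apply, smul_eq_mul]
  field_simp
  ring

theorem dd_comp_eq_zero {F : ℝ × ℝ → ℝ} {u w : (Fin 3 → ℝ) → ℝ}
    (hF : DifferentiableAt ℝ F (u p, w p)) (hu : DifferentiableAt ℝ u p)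
    (hw : DifferentiableAt ℝ w p) (hu0 : dd v u p = 0) (hw0 : dd v w p = 0) :
    dd v (fun q => F (u q, w q)) p = 0 := by
  have h : HasFDerivAt (fun q => F (u q, w q)) _ p :=
    hF.hasFDerivAt.comp p (hu.hasFDerivAt.prodMk hw.hasFDerivAt)
  rw [dd_eq_fderiv] at hu0 hw0 ⊢
  simp [h.fderiv, hu0, hw0, Prod.mk_zero_zero]

end DirectionalDerivative

theorem nab_apply (W : (Fin 3 → ℝ) → (Fin 3 → ℝ)) (p : Fin 3 → ℝ) (i : Fin 3) :
    nab W p i = dd (W p) (fun q => W q i) p :=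
  rfl

namespace Example5

def φ : (Fin 3 → ℝ) → ℝ := fun q => 1/2 * (q 0 ^ 2 + q 1 ^ 2)

def ψ : (Fin 3 → ℝ) → ℝ := fun q => q 2 / q 0

def Z0 : (Fin 3 → ℝ) → (Fin 3 → ℝ) := fun q => ![q 0 * q 1, -(q 0 ^ 2), q 1 * q 2]

def Z1 : (Fin 3 → ℝ) → (Fin 3 → ℝ) := fun q => ![q 0, q 1, 0]

def X : (Fin 3 → ℝ) → (Fin 3 → ℝ) := fun q => ![-(q 2), 0, q 0]

def V (C₁ C₂ C₃ : ℝ) : (Fin 3 → ℝ) → ℝ := fun q =>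
  C₁ * (q 0 ^ 2 + q 1 ^ 2 + q 2 ^ 2) + C₂ / q 1 ^ 2 - C₃ / (q 0 ^ 2 + q 2 ^ 2)

def A : (Fin 3 → ℝ) → ℝ := fun q => 1/2 * ip (Z0 q) (Z0 q) / dd (nab Z0 q) φ q

def G (C₁ C₂ C₃ : ℝ) : ℝ × ℝ → ℝ := fun ab =>
  C₁ * (-4 * ab.1 - 2 * ab.2 ^ 2 * ab.1) + C₂ * ab.2 ^ 2 / (2 * ab.1)
    + C₃ * ab.2 ^ 2 / (2 * ab.1 * (1 + ab.2 ^ 2) ^ 2)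

theorem dd_φ (v q : Fin 3 → ℝ) : dd v φ q = q 0 * v 0 + q 1 * v 1 := by
  unfold φ
  simp (disch := fun_prop) only [dd_mul, dd_add_s17, dd_sq, dd_coord, dd_const]
  ring

theorem dd_Z0_φ (q : Fin 3 → ℝ) : dd (Z0 q) φ q = 0 := by
  simp only [dd_φ, Z0, Matrix.cons_val]
  ring

theorem dd_Z0_ψ {q : Fin 3 → ℝ} (hx : q 0 ≠ 0) : dd (Z0 q) ψ q = 0 := by
  unfold ψ
  simp (disch := first | assumption | fun_prop) only [dd_div, dd_coord]
  simp only [Z0, Matrix.cons_val]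
  ring

theorem dd_nab_Z0_φ (q : Fin 3 → ℝ) : dd (nab Z0 q) φ q = -(q 0 ^ 2) * (q 0 ^ 2 + q 1 ^ 2) := by
  simp (disch := fun_prop) only [dd_φ, nab_apply, Z0, Matrix.cons_val, dd_mul, dd_sq, dd_coord,
    dd_neg]
  ring

theorem dd_nab_Z0_φ_ne_zero {q : Fin 3 → ℝ} (hx : q 0 ≠ 0) : dd (nab Z0 q) φ q ≠ 0 := by
  rw [dd_nab_Z0_φ]
  exact mul_ne_zero (neg_ne_zero.2 (by positivity)) (by positivity)

theorem A_eq : A = fun q =>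
    1/2 * ((q 0 * q 1) ^ 2 + q 0 ^ 4 + (q 1 * q 2) ^ 2) / -(q 0 ^ 2 * (q 0 ^ 2 + q 1 ^ 2)) := by
  funext q
  simp only [A, dd_nab_Z0_φ, ip, Fin.sum_univ_three, Z0, Matrix.cons_val]
  ring

theorem dd_V (C₁ C₂ C₃ : ℝ) (v : Fin 3 → ℝ) {q : Fin 3 → ℝ} (hy : q 1 ≠ 0)
    (hxz : q 0 ^ 2 + q 2 ^ 2 ≠ 0) :
    dd v (V C₁ C₂ C₃) q = 2 * C₁ * (q 0 * v 0 + q 1 * v 1 + q 2 * v 2) - 2 * C₂ * v 1 / q 1 ^ 3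
      + 2 * C₃ * (q 0 * v 0 + q 2 * v 2) / (q 0 ^ 2 + q 2 ^ 2) ^ 2 := by
  have hy2 : q 1 ^ 2 ≠ 0 := pow_ne_zero 2 hy
  unfold V
  simp (disch := first | assumption | fun_prop (disch := assumption)) only [dd_add_s17, dd_sub,
    dd_mul, dd_div, dd_sq, dd_coord, dd_const]
  field_simp
  ring

theorem dd_X_V (C₁ C₂ C₃ : ℝ) {q : Fin 3 → ℝ} (hy : q 1 ≠ 0) (hxz : q 0 ^ 2 + q 2 ^ 2 ≠ 0) :
    dd (X q) (V C₁ C₂ C₃) q = 0 := by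
  simp only [dd_V C₁ C₂ C₃ _ hy hxz, X, Matrix.cons_val]
  ring

theorem dd_Z1_V (C₁ C₂ C₃ : ℝ) {q : Fin 3 → ℝ} (hy : q 1 ≠ 0) (hxz : q 0 ^ 2 + q 2 ^ 2 ≠ 0) :
    dd (Z1 q) (V C₁ C₂ C₃) q
      = 2 * C₁ * (q 0 ^ 2 + q 1 ^ 2) - 2 * C₂ / q 1 ^ 2 + 2 * C₃ * q 0 ^ 2 / (q 0 ^ 2 + q 2 ^ 2) ^ 2 := by
  simp only [dd_V C₁ C₂ C₃ _ hy hxz, Z1, Matrix.cons_val]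
  field_simp
  ring

theorem A_mul_dd_Z1_V_sub_V (C₁ C₂ C₃ : ℝ) {q : Fin 3 → ℝ} (hx : q 0 ≠ 0) (hy : q 1 ≠ 0) :
    A q * dd (Z1 q) (V C₁ C₂ C₃) q - V C₁ C₂ C₃ q = G C₁ C₂ C₃ (φ q, ψ q) := by
  have hxz : q 0 ^ 2 + q 2 ^ 2 ≠ 0 := by positivity
  have hxy : q 0 ^ 2 + q 1 ^ 2 ≠ 0 := by positivity
  rw [dd_Z1_V C₁ C₂ C₃ hy hxz, A_eq]
  simp only [V, G, φ, ψ]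
  field_simp
  ring

theorem eventually_coords_ne_zero {p : Fin 3 → ℝ} (hx : p 0 ≠ 0) (hy : p 1 ≠ 0) :
    ∀ᶠ q in 𝓝 p, q 0 ≠ 0 ∧ q 1 ≠ 0 :=
  ((continuous_apply 0).continuousAt.eventually_ne hx).and
    ((continuous_apply 1).continuousAt.eventually_ne hy)

theorem dd_Z0_A_mul_dd_Z1_V_sub_V (C₁ C₂ C₃ : ℝ) {p : Fin 3 → ℝ} (hx : p 0 ≠ 0) (hy : p 1 ≠ 0) :
    dd (Z0 p) (fun q => A q * dd (Z1 q) (V C₁ C₂ C₃) q - V C₁ C₂ C₃ q) p = 0 := by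
  have hφ : 2 * φ p ≠ 0 := by simp only [φ]; positivity
  have hG : DifferentiableAt ℝ (G C₁ C₂ C₃) (φ p, ψ p) := by
    unfold G
    fun_prop (disch := first | positivity | simpa using hφ)
  rw [dd_congr ((eventually_coords_ne_zero hx hy).mono fun q hq =>
    A_mul_dd_Z1_V_sub_V C₁ C₂ C₃ hq.1 hq.2)]
  exact dd_comp_eq_zero hG (by unfold φ; fun_prop) (by unfold ψ; fun_prop (disch := assumption))
    (dd_Z0_φ p) (dd_Z0_ψ hx)

theorem energy_free (C₁ C₂ C₃ : ℝ) {p : Fin 3 → ℝ} (hx : p 0 ≠ 0) (hy : p 1 ≠ 0) :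
    A p * dd (Z0 p) (fun q => dd (Z1 q) (V C₁ C₂ C₃) q) p
      = dd (Z0 p) (V C₁ C₂ C₃) p - dd (Z0 p) A p * dd (Z1 p) (V C₁ C₂ C₃) p := by
  have hA : DifferentiableAt ℝ A p := by
    rw [A_eq]
    fun_prop (disch := (apply neg_ne_zero.2; positivity))
  have hV : DifferentiableAt ℝ (V C₁ C₂ C₃) p := by
    unfold V
    fun_prop (disch := positivity)
  have hW : DifferentiableAt ℝ (fun q => dd (Z1 q) (V C₁ C₂ C₃) q) p := by
    refine DifferentiableAt.congr_of_eventuallyEq ?_ ((eventually_coords_ne_zero hx hy).mono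
      fun q hq => dd_Z1_V C₁ C₂ C₃ hq.2 (by have := hq.1; positivity))
    fun_prop (disch := positivity)
  have h := dd_Z0_A_mul_dd_Z1_V_sub_V C₁ C₂ C₃ hx hy
  rw [dd_sub (hA.fun_mul hW) hV, dd_mul hA hW] at h
  linarith

end Example5

theorem example5_euclidean_general
    (C₁ C₂ C₃ : ℝ)
    (U : Set (Fin 3 → ℝ)) (hU : U = {p | p 0 ≠ 0 ∧ p 1 ≠ 0})
    (φ : (Fin 3 → ℝ) → ℝ)
    (hφ : φ = fun p => 1/2 * (p 0 ^ 2 + p 1 ^ 2))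
    (Z0' Z1 X' : (Fin 3 → ℝ) → (Fin 3 → ℝ))
    (hZ0' : Z0' = fun p => ![p 0 * p 1, -(p 0 ^ 2), p 1 * p 2])
    (hZ1 : Z1 = fun p => ![p 0, p 1, 0])
    (hX' : X' = fun p => ![-(p 2), 0, p 0])
    (A : (Fin 3 → ℝ) → ℝ)
    (hA : A = fun p => 1/2 * ip (Z0' p) (Z0' p) / dd (nab Z0' p) φ p)
    (V : (Fin 3 → ℝ) → ℝ)
    (hV : V = fun p => C₁ * (p 0 ^ 2 + p 1 ^ 2 + p 2 ^ 2) + C₂ / p 1 ^ 2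
                        - C₃ / (p 0 ^ 2 + p 2 ^ 2)) :
    ∀ p ∈ U,
      dd (nab Z0' p) φ p = -(p 0 ^ 2) * (p 0 ^ 2 + p 1 ^ 2) ∧
      dd (nab Z0' p) φ p ≠ 0 ∧
      dd (X' p) V p = 0 ∧
      A p * dd (Z0' p) (fun q => dd (Z1 q) V q) p
          = dd (Z0' p) V p - dd (Z0' p) A p * dd (Z1 p) V p := by
  subst hU hφ hZ0' hZ1 hX' hA hV
  rintro p ⟨hx, hy⟩
  have hxz : p 0 ^ 2 + p 2 ^ 2 ≠ 0 := by positivity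
  exact ⟨Example5.dd_nab_Z0_φ p, Example5.dd_nab_Z0_φ_ne_zero hx,
    Example5.dd_X_V C₁ C₂ C₃ hy hxz, Example5.energy_free C₁ C₂ C₃ hx hy⟩

/-- Example 5, Euclidean metric: for `φ = ½(x²+y²)`, `ψ = z/x` on
`{x ≠ 0, y ≠ 0}`, with `Z0' = xy∂x − x²∂y + yz∂z`, `Z1 = ∇φ = (x,y,0)`,
`X' = −z∂x + x∂z`: one has `∇_{Z0'}Z0'(φ) = −x²(x²+y²) ≠ 0`, and the potential
`V = C₁(x²+y²+z²) + C₂/y² − C₃/(x²+z²)` satisfies `X'(V) = 0` and the energy-free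
equation `A·Z0'(Z1(V)) = Z0'(V) − Z0'(A)·Z1(V)`. -/
theorem example5_euclidean
    (C₁ C₂ C₃ : ℝ)
    (U : Set (Fin 3 → ℝ)) (hU : U = {p | p 0 ≠ 0 ∧ p 1 ≠ 0})
    (φ ψ : (Fin 3 → ℝ) → ℝ)
    (hφ : φ = fun p => 1/2 * (p 0 ^ 2 + p 1 ^ 2)) (hψ : ψ = fun p => p 2 / p 0)
    (Z0' Z1 X' : (Fin 3 → ℝ) → (Fin 3 → ℝ))
    (hZ0' : Z0' = fun p => ![p 0 * p 1, -(p 0 ^ 2), p 1 * p 2])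
    (hZ1 : Z1 = fun p => ![p 0, p 1, 0])
    (hX' : X' = fun p => ![-(p 2), 0, p 0])
    (A : (Fin 3 → ℝ) → ℝ)
    (hA : A = fun p => 1/2 * ip (Z0' p) (Z0' p) / dd (nab Z0' p) φ p)
    (V : (Fin 3 → ℝ) → ℝ)
    (hV : V = fun p => C₁ * (p 0 ^ 2 + p 1 ^ 2 + p 2 ^ 2) + C₂ / p 1 ^ 2
                        - C₃ / (p 0 ^ 2 + p 2 ^ 2)) :
    ∀ p ∈ U,
      dd (nab Z0' p) φ p = -(p 0 ^ 2) * (p 0 ^ 2 + p 1 ^ 2) ∧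
      dd (nab Z0' p) φ p ≠ 0 ∧
      dd (X' p) V p = 0 ∧
      A p * dd (Z0' p) (fun q => dd (Z1 q) V q) p
          = dd (Z0' p) V p - dd (Z0' p) A p * dd (Z1 p) V p :=
  example5_euclidean_general C₁ C₂ C₃ U hU φ hφ Z0' Z1 X' hZ0' hZ1 hX' A hA V hV
end
end

section
/- Let g be a real symmetric 3×3 matrix with entries g_{ij}. Then g is invertible and satisfies the three equations g₂₃(g₁₁+g₁₂) = g₁₃(g₂₂+g₁₂), g₃₃(g₁₂−g₁₁) = g₁₃(g₂₃−g₁₃), and g₃₃(g₂₂−g₁₂) = g₂₃(g₂₃−g₁₃), if and only if g₁₃ = g₂₃ ≠ 0, g₃₃ = 0, g₂₂ = g₁₁, and g₁₁ ≠ g₁₂. -/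
noncomputable section

/-!
Write `a, b, c, d, e, f` for `g₁₁, g₁₂, g₁₃, g₂₂, g₂₃, g₃₃`. If `e ≠ c`, then `f ≠ 0` (otherwise
the last two equations give `(e - c)² = 0`), and multiplying the first equation by `f` and
eliminating `bf`, `df` with the other two leaves `2(af - c²)(e - c) = 0`; so `af = c²`, `bf = ce`,
and these make `f · det g` vanish. Once `e = c`, the last two equations read
`f(b - a) = f(d - b) = 0`, and `f ≠ 0` would give `a = b = d` and `det g = 0`. With `f = 0` the
determinant is `c²(2b - a - d)`, and the first equation `c(a - d) = 0` leaves `det g = 2c²(b - a)`.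
-/

theorem Matrix.IsSymm.det_fin_three_eq {R : Type*} [CommRing R] {g : Matrix (Fin 3) (Fin 3) R}
    (hg : g.IsSymm) :
    g.det = g 0 0 * g 1 1 * g 2 2 - g 0 0 * g 1 2 ^ 2 - g 0 1 ^ 2 * g 2 2
      + 2 * g 0 1 * g 0 2 * g 1 2 - g 0 2 ^ 2 * g 1 1 := by
  rw [Matrix.det_fin_three, hg.apply 0 1, hg.apply 0 2, hg.apply 1 2]
  ring

section Case1

variable {K : Type*} [Field K] [NeZero (2 : K)] {a b c d e f : K}

theorem case1_eq_of_det_ne_zero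
    (hdet : a * d * f - a * e ^ 2 - b ^ 2 * f + 2 * b * c * e - c ^ 2 * d ≠ 0)
    (h₁ : e * (a + b) = c * (d + b)) (h₂ : f * (b - a) = c * (e - c))
    (h₃ : f * (d - b) = e * (e - c)) :
    c = e := by
  by_contra hce
  have hec : e - c ≠ 0 := sub_ne_zero.mpr (Ne.symm hce)
  have hf : f ≠ 0 := by
    rintro rfl
    have hsq : (e - c) ^ 2 = 0 := by linear_combination h₂ - h₃
    exact hec (pow_eq_zero_iff two_ne_zero |>.mp hsq)
  have haf : a * f = c ^ 2 := by
    refine mul_left_cancel₀ (mul_ne_zero two_ne_zero hec) ?_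
    linear_combination f * h₁ - (e - 2 * c) * h₂ + c * h₃
  have hbf : b * f = c * e := by linear_combination h₂ + haf
  refine hdet (mul_right_cancel₀ hf ?_)
  linear_combination (d * f - e ^ 2) * haf + (c * e - b * f) * hbf

theorem case1_iff_of_eq :
    (a * d * f - a * c ^ 2 - b ^ 2 * f + 2 * b * c * c - c ^ 2 * d ≠ 0 ∧
      c * (a + b) = c * (d + b) ∧ f * (b - a) = c * (c - c) ∧ f * (d - b) = c * (c - c)) ↔
    (c ≠ 0 ∧ f = 0 ∧ d = a ∧ a ≠ b) := by
  constructor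
  · rintro ⟨hdet, h₁, h₂, h₃⟩
    have hf : f = 0 := by
      by_contra hf
      have hba : b = a := by simpa [sub_eq_zero, hf] using h₂
      have hdb : d = b := by simpa [sub_eq_zero, hf] using h₃
      subst hba hdb
      exact hdet (by ring)
    subst hf
    have hc : c ≠ 0 := by
      rintro rfl
      exact hdet (by ring)
    have hda : d = a := (mul_left_cancel₀ hc (by linear_combination h₁)).symm
    subst hda
    refine ⟨hc, rfl, rfl, ?_⟩
    rintro rfl
    exact hdet (by ring)
  · rintro ⟨hc, rfl, rfl, hab⟩
    refine ⟨?_, by ring, by ring, by ring⟩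
    rw [show d * d * 0 - d * c ^ 2 - b ^ 2 * 0 + 2 * b * c * c - c ^ 2 * d
      = 2 * c ^ 2 * (b - d) by ring]
    exact mul_ne_zero (mul_ne_zero two_ne_zero (pow_ne_zero 2 hc)) (sub_ne_zero.mpr (Ne.symm hab))

end Case1

/-- Section 6, algebraic classification: a real symmetric 3×3 matrix `g`
is invertible and satisfies the three Case-1 equations iff
`g₁₃ = g₂₃ ≠ 0`, `g₃₃ = 0`, `g₂₂ = g₁₁` and `g₁₁ ≠ g₁₂`. -/
theorem case1_metric_classification
    (g : Matrix (Fin 3) (Fin 3) ℝ) (hsym : g.IsSymm) :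
    (IsUnit g.det ∧
      g 1 2 * (g 0 0 + g 0 1) = g 0 2 * (g 1 1 + g 0 1) ∧
      g 2 2 * (g 0 1 - g 0 0) = g 0 2 * (g 1 2 - g 0 2) ∧
      g 2 2 * (g 1 1 - g 0 1) = g 1 2 * (g 1 2 - g 0 2)) ↔
    (g 0 2 = g 1 2 ∧ g 0 2 ≠ 0 ∧ g 2 2 = 0 ∧ g 1 1 = g 0 0 ∧ g 0 0 ≠ g 0 1) := by
  rw [isUnit_iff_ne_zero, hsym.det_fin_three_eq]
  constructor
  · rintro ⟨hdet, h₁, h₂, h₃⟩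
    have hce := case1_eq_of_det_ne_zero hdet h₁ h₂ h₃
    rw [← hce] at hdet h₁ h₂ h₃
    exact ⟨hce, case1_iff_of_eq.mp ⟨hdet, h₁, h₂, h₃⟩⟩
  · rintro ⟨hce, h⟩
    obtain ⟨hdet, h₁, h₂, h₃⟩ := case1_iff_of_eq.mpr h
    rw [← hce]
    exact ⟨hdet, h₁, h₂, h₃⟩
end
end
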